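/- arXiv:2205.03551 — 3 statements merged into one kernel-verified Lean document; each statement's English description precedes it below -/
import Mathlib

section
/- Let β, τ be positive reals with τ > β. Then for every integer w ≥ 2, ∑_{v=1}^{w−1} (τ + βv)^{−2}·(τ + β(w−v))^{−2} ≤ 8/(β·τ·(τ + βw)²). -/
/-!
With `f n = (τ + β n)⁻²`, the product `f v · f (w - v)` is at most `2 / (τ + β w)²` times
`f v + f (w - v)`, because the two bases add up to `2τ + βw ≥ τ + βw`. The reflection `v ↦ w - v`
turns the resulting sum into `4 / (τ + β w)² · ∑ f v`, and `∑_{v ≥ 1} f v ≤ 1 / (βτ)` by comparing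
`f (i + 1)` with the telescoping `((τ + β i)⁻¹ - (τ + β (i + 1))⁻¹) / β`.
-/

open Finset

theorem Finset.sum_Icc_one_sub_reflect {M : Type*} [AddCommMonoid M] (f : ℕ → M) (w : ℕ) :
    ∑ v ∈ Icc 1 (w - 1), f (w - v) = ∑ v ∈ Icc 1 (w - 1), f v := by
  refine sum_nbij' (w - ·) (w - ·) ?_ ?_ ?_ ?_ fun _ _ ↦ rfl <;>
    · intro v hv
      simp only [mem_Icc] at hv ⊢
      omega

theorem inv_sq_mul_inv_sq_le {a b c : ℝ} (ha : 0 < a) (hb : 0 < b) (hc : 0 < c)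
    (hcab : c ≤ a + b) :
    (a ^ 2)⁻¹ * (b ^ 2)⁻¹ ≤ 2 / c ^ 2 * ((a ^ 2)⁻¹ + (b ^ 2)⁻¹) := by
  have hsq : c ^ 2 ≤ 2 * (a ^ 2 + b ^ 2) := by nlinarith [sq_nonneg (a - b)]
  rw [div_mul_eq_mul_div, le_div_iff₀ (by positivity)]
  field_simp
  nlinarith

theorem inv_sq_le_sub_inv_div {x h : ℝ} (hx : 0 < x) (hh : 0 < h) :
    ((x + h) ^ 2)⁻¹ ≤ (x⁻¹ - (x + h)⁻¹) / h := by
  have hdiff : (x⁻¹ - (x + h)⁻¹) / h = (x * (x + h))⁻¹ := by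
    field_simp
    ring
  rw [hdiff, sq]
  exact inv_anti₀ (by positivity) (by nlinarith)

theorem sum_Icc_inv_sq_le_telescope {β τ : ℝ} (hβ : 0 < β) (hτ : 0 < τ) (n : ℕ) :
    ∑ v ∈ Icc 1 n, ((τ + β * v) ^ 2)⁻¹ ≤ (τ⁻¹ - (τ + β * n)⁻¹) / β := by
  induction n with
  | zero => simp
  | succ n ih =>
    rw [sum_Icc_succ_top (by omega)]
    have hstep := inv_sq_le_sub_inv_div (x := τ + β * n) (by positivity) hβ
    rw [show τ + β * n + β = τ + β * ↑(n + 1) by push_cast; ring] at hstep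
    calc _ ≤ (τ⁻¹ - (τ + β * n)⁻¹) / β + ((τ + β * n)⁻¹ - (τ + β * ↑(n + 1))⁻¹) / β :=
          add_le_add ih hstep
      _ = _ := by ring

theorem sum_Icc_inv_sq_le {β τ : ℝ} (hβ : 0 < β) (hτ : 0 < τ) (n : ℕ) :
    ∑ v ∈ Icc 1 n, ((τ + β * v) ^ 2)⁻¹ ≤ 1 / (β * τ) :=
  calc _ ≤ (τ⁻¹ - (τ + β * n)⁻¹) / β := sum_Icc_inv_sq_le_telescope hβ hτ n
    _ ≤ τ⁻¹ / β := by gcongr; exact sub_le_self _ (by positivity)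
    _ = 1 / (β * τ) := by field_simp

theorem convolution_sum_bound_general (β τ : ℝ) (hβ : 0 < β) (hτ : β < τ) (w : ℕ) :
    ∑ v ∈ Finset.Icc 1 (w - 1),
        ((τ + β * v) ^ 2)⁻¹ * ((τ + β * (w - v : ℕ)) ^ 2)⁻¹ ≤
      8 / (β * τ * (τ + β * w) ^ 2) := by
  have hτ0 : 0 < τ := hβ.trans hτ
  set f : ℕ → ℝ := fun n ↦ ((τ + β * n) ^ 2)⁻¹
  have hsplit : ∀ v ∈ Icc 1 (w - 1),
      f v * f (w - v) ≤ 2 / (τ + β * w) ^ 2 * (f v + f (w - v)) := by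
    intro v hv
    have hvw : v ≤ w := by simp only [mem_Icc] at hv; omega
    refine inv_sq_mul_inv_sq_le (by positivity) (by positivity) (by positivity) ?_
    rw [Nat.cast_sub hvw]
    linarith
  calc ∑ v ∈ Icc 1 (w - 1), f v * f (w - v)
      ≤ ∑ v ∈ Icc 1 (w - 1), 2 / (τ + β * w) ^ 2 * (f v + f (w - v)) := sum_le_sum hsplit
    _ = 4 / (τ + β * w) ^ 2 * ∑ v ∈ Icc 1 (w - 1), f v := by
      rw [← mul_sum, sum_add_distrib, sum_Icc_one_sub_reflect]
      ring
    _ ≤ 4 / (τ + β * w) ^ 2 * (1 / (β * τ)) := by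
      gcongr
      exact sum_Icc_inv_sq_le hβ hτ0 _
    _ ≤ 8 / (β * τ * (τ + β * w) ^ 2) := by
      rw [div_mul_div_comm, mul_one, mul_comm]
      gcongr
      norm_num

/-- Convolution bound: for positive reals `τ > β > 0` and integer `w ≥ 2`,
`∑_{v=1}^{w−1} (τ+βv)⁻²·(τ+β(w−v))⁻² ≤ 8/(βτ(τ+βw)²)`. -/
theorem convolution_sum_bound (β τ : ℝ) (hβ : 0 < β) (hτ : β < τ) (w : ℕ) (hw : 2 ≤ w) :
    ∑ v ∈ Finset.Icc 1 (w - 1),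
        ((τ + β * v) ^ 2)⁻¹ * ((τ + β * (w - v : ℕ)) ^ 2)⁻¹ ≤
      8 / (β * τ * (τ + β * w) ^ 2) :=
  convolution_sum_bound_general β τ hβ hτ w
end

section
/- Let Y be a Poisson random variable with mean 1/2, independent of an i.i.d. sequence η_1, η_2, … of Exp(λM) random variables, where λM ≥ 8. Then P(∑_{i=1}^Y η_i ≥ 1/4) ≤ 2·exp(−λM/32). -/
open MeasureTheory ProbabilityTheory Real Finset
open scoped NNReal ENNReal

/-!
A Chernoff bound at `t = λM/2`. Given `Y = n`, the variable `e^{t ∑_{i<n} ηᵢ}` is a product of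
`n` independent factors of mean `λM/(λM - t) = 2`, so `E[e^{tS}] = E[2^Y] = e^{1/2}` for the
compound sum `S`, and `P(S ≥ 1/4) ≤ e^{1/2 - λM/8} ≤ 2e^{-λM/32}` since `λM ≥ 8`.
-/

lemma exponentialPDF_mul_exp_mul {r t : ℝ} (hr : 0 ≤ r) (ht : t < r) (x : ℝ) :
    exponentialPDF r x * ENNReal.ofReal (exp (t * x)) =
      ENNReal.ofReal (r / (r - t)) * exponentialPDF (r - t) x := by
  have hrt : r - t ≠ 0 := (sub_pos.2 ht).ne'
  simp only [exponentialPDF_eq]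
  split_ifs
  · rw [← ENNReal.ofReal_mul (by positivity),
      ← ENNReal.ofReal_mul (div_nonneg hr (sub_pos.2 ht).le)]
    congr 1
    field_simp
    rw [mul_assoc, ← exp_add]
    ring_nf
  · simp

lemma lintegral_exp_mul_expMeasure {r t : ℝ} (hr : 0 ≤ r) (ht : t < r) :
    ∫⁻ x, ENNReal.ofReal (exp (t * x)) ∂expMeasure r = ENNReal.ofReal (r / (r - t)) := by
  have hpdf (r : ℝ) : Measurable (exponentialPDF r) :=
    (measurable_exponentialPDFReal r).ennreal_ofReal
  rw [show expMeasure r = volume.withDensity (exponentialPDF r) from rfl,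
    lintegral_withDensity_eq_lintegral_mul _ (hpdf r) (by fun_prop)]
  simp only [Pi.mul_apply, exponentialPDF_mul_exp_mul hr ht]
  rw [lintegral_const_mul _ (hpdf _), lintegral_exponentialPDF_eq_one (sub_pos.2 ht), mul_one]

lemma lintegral_pow_poissonMeasure (r : ℝ≥0) {s : ℝ} (hs : 0 ≤ s) :
    ∫⁻ n, ENNReal.ofReal s ^ n ∂poissonMeasure r = ENNReal.ofReal (exp (r * (s - 1))) := by
  have hsum : HasSum (fun n : ℕ ↦ exp (-r) * ((r * s) ^ n / n.factorial))
      (exp (-r) * exp (r * s)) := by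
    simpa [← exp_eq_exp_ℝ] using
      (NormedSpace.expSeries_div_hasSum_exp (r * s : ℝ)).mul_left (exp (-r))
  rw [lintegral_countable', mul_sub, mul_one, sub_eq_neg_add, exp_add, ← hsum.tsum_eq,
    ENNReal.ofReal_tsum_of_nonneg (fun n ↦ by positivity) hsum.summable]
  refine tsum_congr fun n ↦ ?_
  rw [poissonMeasure_singleton, ← ENNReal.ofReal_pow hs, ← ENNReal.ofReal_mul (by positivity)]
  congr 1
  ring

lemma lintegral_prod_range_of_indepFun {Ω β : Type*} [MeasurableSpace Ω] [MeasurableSpace β]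
    {μ : Measure Ω} {N : Ω → ℕ} {X : ℕ → Ω → β}
    (hN : Measurable N) (hX : ∀ i, Measurable (X i)) (hXindep : iIndepFun X μ)
    (hNX : IndepFun N (fun ω i ↦ X i ω) μ) {f : β → ℝ≥0∞} (hf : Measurable f) {m : ℝ≥0∞}
    (hm : ∀ i, ∫⁻ ω, f (X i ω) ∂μ = m) :
    ∫⁻ ω, ∏ i ∈ range (N ω), f (X i ω) ∂μ = ∫⁻ n, m ^ n ∂μ.map N := by
  have := hXindep.isProbabilityMeasure
  set V : Ω → ℕ → β := fun ω i ↦ X i ω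
  have hV : Measurable V := measurable_pi_lambda _ hX
  set G : (ℕ → β) × ℕ → ℝ≥0∞ := fun p ↦ ∏ i ∈ range p.2, f (p.1 i)
  have hG : Measurable G := measurable_from_prod_countable_left fun n ↦
    Finset.measurable_prod (f := fun i (v : ℕ → β) ↦ f (v i)) (range n)
      fun i _ ↦ hf.comp (measurable_pi_apply i)
  have hinner (n : ℕ) : ∫⁻ v, G (v, n) ∂μ.map V = m ^ n := by
    rw [lintegral_map (f := fun v ↦ G (v, n)) (by fun_prop) hV]
    simpa [hm] using lintegral_prod_eq_prod_lintegral_of_indepFun (range n)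
      (fun i ω ↦ f (X i ω)) (hXindep.comp (fun _ ↦ f) fun _ ↦ hf) fun i ↦ hf.comp (hX i)
  -- independence makes the law of `(V, N)` a product, so one can integrate over `V` first
  calc ∫⁻ ω, ∏ i ∈ range (N ω), f (X i ω) ∂μ
        = ∫⁻ p, G p ∂μ.map fun ω ↦ (V ω, N ω) := (lintegral_map hG (hV.prodMk hN)).symm
    _ = ∫⁻ n, ∫⁻ v, G (v, n) ∂μ.map V ∂μ.map N := by
        rw [(indepFun_iff_map_prod_eq_prod_map_map hV.aemeasurable hN.aemeasurable).1 hNX.symm,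
          lintegral_prod_symm _ hG.aemeasurable]
    _ = ∫⁻ n, m ^ n ∂μ.map N := by simp only [hinner]

lemma measure_ge_le_exp_mul_lintegral_exp {Ω : Type*} [MeasurableSpace Ω] {μ : Measure Ω}
    {X : Ω → ℝ} (hX : AEMeasurable X μ) {t : ℝ} (ht : 0 ≤ t) (ε : ℝ) :
    μ {ω | ε ≤ X ω} ≤
      ENNReal.ofReal (exp (-t * ε)) * ∫⁻ ω, ENNReal.ofReal (exp (t * X ω)) ∂μ := by
  have hsub : {ω | ε ≤ X ω} ⊆
      {ω | ENNReal.ofReal (exp (t * ε)) ≤ ENNReal.ofReal (exp (t * X ω))} :=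
    fun ω hω ↦ ENNReal.ofReal_le_ofReal (exp_le_exp.2 (mul_le_mul_of_nonneg_left hω ht))
  calc μ {ω | ε ≤ X ω}
      = ENNReal.ofReal (exp (-t * ε)) *
          (ENNReal.ofReal (exp (t * ε)) * μ {ω | ε ≤ X ω}) := by
        rw [← mul_assoc, ← ENNReal.ofReal_mul (exp_pos _).le, ← exp_add]
        simp
    _ ≤ ENNReal.ofReal (exp (-t * ε)) * ∫⁻ ω, ENNReal.ofReal (exp (t * X ω)) ∂μ := by
        gcongr
        exact (mul_le_mul_right (measure_mono hsub) _).trans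
          (mul_meas_ge_le_lintegral₀ (by fun_prop) _)

theorem poisson_sum_exponential_tail_general {Ω : Type*} [MeasureSpace Ω]
    (lam M : ℝ) (hlM : 8 ≤ lam * M)
    (Y : Ω → ℕ) (hYmeas : Measurable Y)
    (hYdist : Measure.map Y ℙ = poissonMeasure (1 / 2))
    (η : ℕ → Ω → ℝ) (hmeas : ∀ i, Measurable (η i))
    (hdist : ∀ i, Measure.map (η i) ℙ = expMeasure (lam * M))
    (hindep : iIndepFun η ℙ)
    (hYindep : IndepFun Y (fun ω => fun i => η i ω) ℙ) :
    ℙ {ω | (1 / 4 : ℝ) ≤ ∑ i ∈ Finset.range (Y ω), η i ω} ≤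
      ENNReal.ofReal (2 * Real.exp (-(lam * M) / 32)) := by
  set c := lam * M
  have hc : 0 < c := by linarith
  have hsum_meas : Measurable fun ω ↦ ∑ i ∈ range (Y ω), η i ω :=
    (measurable_from_prod_countable_left (f := fun p : Ω × ℕ ↦ ∑ i ∈ range p.2, η i p.1)
      fun n ↦ Finset.measurable_sum (range n) fun i _ ↦ hmeas i).comp
        (measurable_id.prodMk hYmeas)
  have hmgf_η (i : ℕ) :
      ∫⁻ ω, ENNReal.ofReal (exp (c / 2 * η i ω)) = ENNReal.ofReal 2 := by
    rw [← lintegral_map (f := fun x ↦ ENNReal.ofReal (exp (c / 2 * x))) (by fun_prop) (hmeas i),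
      hdist, lintegral_exp_mul_expMeasure hc.le (by linarith)]
    congr 1
    field_simp
    norm_num
  have hmgf : ∫⁻ ω, ENNReal.ofReal (exp (c / 2 * ∑ i ∈ range (Y ω), η i ω)) =
      ENNReal.ofReal (exp (1 / 2)) := by
    simp_rw [mul_sum, exp_sum, ENNReal.ofReal_prod_of_nonneg fun _ _ ↦ (exp_pos _).le]
    rw [lintegral_prod_range_of_indepFun hYmeas hmeas hindep hYindep
      (f := fun x ↦ ENNReal.ofReal (exp (c / 2 * x))) (by fun_prop) hmgf_η, hYdist,
      lintegral_pow_poissonMeasure _ zero_le_two]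
    norm_num
  calc ℙ {ω | (1 / 4 : ℝ) ≤ ∑ i ∈ range (Y ω), η i ω}
      ≤ ENNReal.ofReal (exp (-(c / 2) * (1 / 4))) * ENNReal.ofReal (exp (1 / 2)) :=
        hmgf ▸ measure_ge_le_exp_mul_lintegral_exp hsum_meas.aemeasurable (by positivity) _
    _ ≤ ENNReal.ofReal (2 * exp (-c / 32)) := by
        rw [← ENNReal.ofReal_mul (exp_pos _).le, ← exp_add]
        gcongr
        calc exp (-(c / 2) * (1 / 4) + 1 / 2) ≤ exp (-c / 32) := by gcongr; linarith
          _ ≤ 2 * exp (-c / 32) := by linarith [exp_pos (-c / 32)]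

/-- If `Y ∼ Pois(1/2)` is independent of an i.i.d. sequence `η₁, η₂, …` of `Exp(λM)`
random variables with `λM ≥ 8`, then `P(∑_{i=1}^Y ηᵢ ≥ 1/4) ≤ 2·exp(−λM/32)`. -/
theorem poisson_sum_exponential_tail {Ω : Type*} [MeasureSpace Ω]
    [IsProbabilityMeasure (ℙ : Measure Ω)]
    (lam M : ℝ) (hlM : 8 ≤ lam * M)
    (Y : Ω → ℕ) (hYmeas : Measurable Y)
    (hYdist : Measure.map Y ℙ = poissonMeasure (1 / 2))
    (η : ℕ → Ω → ℝ) (hmeas : ∀ i, Measurable (η i))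
    (hdist : ∀ i, Measure.map (η i) ℙ = expMeasure (lam * M))
    (hindep : iIndepFun η ℙ)
    (hYindep : IndepFun Y (fun ω => fun i => η i ω) ℙ) :
    ℙ {ω | (1 / 4 : ℝ) ≤ ∑ i ∈ Finset.range (Y ω), η i ω} ≤
      ENNReal.ofReal (2 * Real.exp (-(lam * M) / 32)) :=
  poisson_sum_exponential_tail_general lam M hlM Y hYmeas hYdist η hmeas hdist hindep hYindep
end

section
/- Let 𝒯 be a Galton–Watson tree where the root has offspring distribution μ and all other vertices have offspring distribution μ̃, with d̃ := E_{D∼μ̃}[D] > 1, and suppose E_{N∼μ}[e^{cN}] < ∞ and E_{N∼μ̃}[e^{cN}] < ∞ for some c > 0. Let Z_s denote the number of vertices at generation s. Then there exists t > 0 such that sup_{s ≥ 1} E[exp(t · Z_s · d̃^{−s})] < ∞. -/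
open MeasureTheory ProbabilityTheory Real Finset
open scoped ENNReal

/-!
Given generation `s`, `Z (s+1)` is a sum of `Z s` fresh independent `μ̃`-variables, so
`E exp (u Z_{s+1}) ≤ E exp ((u d̃ + K u²) Z_s)` as soon as `e^{u d̃ + K u²}` bounds the moment
generating function of `μ̃`; by `e^y ≤ 1 + y + y² e^y` this holds for `0 ≤ u ≤ c/2` with
`K = 8 c⁻² E_{μ̃} e^{cN}`. The exponents `u_s = t d̃^{-s} (1 + d̃^{-s})` (the paper's `t_s d̃^{-s}`,
with `1 + d̃^{-s}` in place of `exp (2αt ∑_{i>s} d̃^{-i})`) satisfy `u_{s+1} d̃ + K u_{s+1}² ≤ u_s`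
once `4Kt ≤ d̃ - 1`, so `E exp (u_s Z_s)` is nonincreasing for `s ≥ 1` and bounded by
`E_μ e^{cN}`; finally `t d̃^{-s} ≤ u_s`.
-/

lemma exp_le_one_add_add_sq_mul_exp {y : ℝ} (hy : 0 ≤ y) :
    exp y ≤ 1 + y + y ^ 2 * exp y := by
  have h : (1 - y) * exp y ≤ 1 := by
    have := mul_le_mul_of_nonneg_right (add_one_le_exp (-y)) (exp_pos y).le
    rwa [exp_neg, inv_mul_cancel₀ (exp_pos y).ne', neg_add_eq_sub] at this
  nlinarith [one_le_exp hy]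

lemma exp_mul_le_one_add_add_sq_mul_exp {c u x : ℝ} (hc : 0 < c) (hu : 0 ≤ u) (huc : u ≤ c / 2)
    (hx : 0 ≤ x) : exp (u * x) ≤ 1 + u * x + 8 / c ^ 2 * u ^ 2 * exp (c * x) := by
  have hw : (c * x / 2) ^ 2 ≤ 2 * exp (c * x / 2) := by
    have := pow_div_factorial_le_exp (c * x / 2) (by positivity) 2
    norm_num [Nat.factorial] at this; linarith
  have hux : exp (u * x) ≤ exp (c * x / 2) := exp_le_exp.2 (by nlinarith)
  have hsq : (u * x) ^ 2 * exp (u * x) ≤ 8 / c ^ 2 * u ^ 2 * exp (c * x) :=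
    calc (u * x) ^ 2 * exp (u * x) = (2 * u / c) ^ 2 * (c * x / 2) ^ 2 * exp (u * x) := by
          field_simp
      _ ≤ (2 * u / c) ^ 2 * (2 * exp (c * x / 2)) * exp (c * x / 2) := by gcongr
      _ = 8 / c ^ 2 * u ^ 2 * exp (c * x) := by
          rw [mul_assoc, mul_assoc, ← exp_add]; ring_nf
  linarith [exp_le_one_add_add_sq_mul_exp (mul_nonneg hu hx)]

theorem lintegral_ofReal_exp_mul_le_of_integrable_exp (ν : Measure ℕ) [IsProbabilityMeasure ν]
    {c u : ℝ} (hc : 0 < c) (hν : Integrable (fun n : ℕ => exp (c * n)) ν) (hu : 0 ≤ u)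
    (huc : u ≤ c / 2) :
    ∫⁻ n, ENNReal.ofReal (exp (u * n)) ∂ν ≤
      ENNReal.ofReal (exp (u * ∫ n, (n : ℝ) ∂ν + 8 / c ^ 2 * (∫ n, exp (c * n) ∂ν) * u ^ 2)) := by
  have hid : Integrable (fun n : ℕ => (n : ℝ)) ν := by
    refine (hν.const_mul c⁻¹).mono' (measurable_of_countable _).aestronglyMeasurable
      (ae_of_all _ fun n => ?_)
    rw [norm_of_nonneg (Nat.cast_nonneg n), ← div_eq_inv_mul, le_div_iff₀ hc, mul_comm]
    linarith [add_one_le_exp (c * n)]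
  have hlin : Integrable (fun n : ℕ => 1 + u * (n : ℝ)) ν :=
    (integrable_const 1).add (hid.const_mul u)
  have hrhs : Integrable (fun n : ℕ => 1 + u * (n : ℝ) + 8 / c ^ 2 * u ^ 2 * exp (c * n)) ν :=
    hlin.add (hν.const_mul _)
  set w := u * ∫ n, (n : ℝ) ∂ν + 8 / c ^ 2 * (∫ n, exp (c * n) ∂ν) * u ^ 2
  calc ∫⁻ n, ENNReal.ofReal (exp (u * n)) ∂ν
      ≤ ∫⁻ n, ENNReal.ofReal (1 + u * n + 8 / c ^ 2 * u ^ 2 * exp (c * n)) ∂ν :=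
        lintegral_mono fun n => ENNReal.ofReal_le_ofReal
          (exp_mul_le_one_add_add_sq_mul_exp hc hu huc (Nat.cast_nonneg n))
    _ = ENNReal.ofReal (1 + w) := by
        rw [← ofReal_integral_eq_lintegral_ofReal hrhs
          (ae_of_all _ fun n => by positivity), integral_add hlin (hν.const_mul _),
          integral_add (integrable_const 1) (hid.const_mul u), integral_const_mul,
          integral_const_mul]
        simp only [integral_const, probReal_univ, smul_eq_mul, one_mul, w]
        ring_nf
    _ ≤ ENNReal.ofReal (exp w) := ENNReal.ofReal_le_ofReal (by linarith [add_one_le_exp w])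

noncomputable def exponentSeq (t d : ℝ) (s : ℕ) : ℝ := t * (d ^ s)⁻¹ * (1 + (d ^ s)⁻¹)

section
variable {t d : ℝ}

lemma inv_pow_mem_Icc (hd : 1 ≤ d) (s : ℕ) : (d ^ s)⁻¹ ∈ Set.Icc (0 : ℝ) 1 :=
  ⟨by positivity, inv_le_one_of_one_le₀ (one_le_pow₀ hd)⟩

lemma exponentSeq_nonneg (ht : 0 ≤ t) (hd : 1 ≤ d) (s : ℕ) : 0 ≤ exponentSeq t d s := by
  have := (inv_pow_mem_Icc hd s).1
  unfold exponentSeq; positivity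

lemma exponentSeq_le (ht : 0 ≤ t) (hd : 1 ≤ d) (s : ℕ) : exponentSeq t d s ≤ 2 * t := by
  obtain ⟨h0, h1⟩ := inv_pow_mem_Icc hd s
  calc exponentSeq t d s ≤ t * 1 * (1 + 1) := by unfold exponentSeq; gcongr
    _ = 2 * t := by ring

lemma mul_inv_pow_le_exponentSeq (ht : 0 ≤ t) (hd : 1 ≤ d) (s : ℕ) :
    t * (d ^ s)⁻¹ ≤ exponentSeq t d s :=
  le_mul_of_one_le_right (by positivity) (le_add_of_nonneg_right (inv_pow_mem_Icc hd s).1)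

lemma exponentSeq_succ_mul_add_sq_le {K : ℝ} (hK : 0 ≤ K) (ht : 0 ≤ t) (hd : 1 < d)
    (htK : 4 * K * t ≤ d - 1) (s : ℕ) :
    exponentSeq t d (s + 1) * d + K * exponentSeq t d (s + 1) ^ 2 ≤ exponentSeq t d s := by
  obtain ⟨hy0, hy1⟩ := inv_pow_mem_Icc hd.le (s + 1)
  set y := (d ^ (s + 1))⁻¹
  have hdy : (d ^ s)⁻¹ = d * y := by simp only [y, pow_succ]; field_simp
  have hsq : K * (t * y * (1 + y)) ^ 2 ≤ d * ((d - 1) * (t * y ^ 2)) :=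
    calc K * (t * y * (1 + y)) ^ 2 = (1 + y) ^ 2 * (K * t * (t * y ^ 2)) := by ring
      _ ≤ 4 * (K * t * (t * y ^ 2)) := by gcongr; nlinarith
      _ = 4 * K * t * (t * y ^ 2) := by ring
      _ ≤ (d - 1) * (t * y ^ 2) := by gcongr
      _ ≤ d * ((d - 1) * (t * y ^ 2)) :=
        le_mul_of_one_le_left (mul_nonneg (by linarith) (by positivity)) hd.le
  unfold exponentSeq
  rw [hdy]
  linear_combination hsq

end

section
variable {Ω ι : Type*} {mΩ : MeasurableSpace Ω} {P : Measure Ω} {m : ι → MeasurableSpace Ω}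

lemma lintegral_eq_tsum_setLIntegral_fiber {N : Ω → ℕ} (hN : Measurable N) (g : Ω → ℝ≥0∞) :
    ∫⁻ ω, g ω ∂P = ∑' k, ∫⁻ ω in N ⁻¹' {k}, g ω ∂P := by
  rw [← lintegral_iUnion (fun k => hN (measurableSet_singleton k)), ← Set.preimage_iUnion,
    Set.iUnion_singleton_eq_range, Set.range_id', Set.preimage_univ, setLIntegral_univ]
  · exact fun k l hkl => Set.disjoint_left.2 fun ω h1 h2 => hkl (h1.symm.trans h2)

theorem setLIntegral_prod_range_eq_of_iIndep (hm : ∀ j, m j ≤ mΩ) (hind : iIndep m P)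
    {S : Set ι} {e : ℕ → ι} (he : Function.Injective e) (heS : ∀ i, e i ∉ S)
    {A : Set Ω} (hA : MeasurableSet[⨆ j ∈ S, m j] A)
    {f : ℕ → Ω → ℝ≥0∞} (hf : ∀ i, Measurable[m (e i)] (f i)) (n : ℕ) :
    ∫⁻ ω in A, ∏ i ∈ range n, f i ω ∂P = P A * ∏ i ∈ range n, ∫⁻ ω, f i ω ∂P := by
  have hA' : MeasurableSet A := iSup₂_le (fun j _ => hm j) _ hA
  induction n with
  | zero => simp
  | succ n ih =>
    set T := S ∪ e '' Set.Iio n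
    have hdisj : Disjoint T {e n} := by
      rw [Set.disjoint_singleton_right]
      rintro (h | ⟨i, hi, hin⟩)
      · exact heS n h
      · exact (Set.mem_Iio.1 hi).ne (he hin)
    have hindep : Indep (⨆ j ∈ T, m j) (m (e n)) P := by
      simpa using indep_iSup_of_disjoint hm hind hdisj
    have hprod : Measurable[⨆ j ∈ T, m j] fun ω => A.indicator 1 ω * ∏ i ∈ range n, f i ω := by
      have hAT : MeasurableSet[⨆ j ∈ T, m j] A :=
        MeasurableSpace.le_def.1 (biSup_mono fun _ => Set.mem_union_left _) _ hA
      refine (Measurable.indicator measurable_const hAT).mul ?_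
      refine Finset.measurable_prod _ fun i hi => (hf i).mono ?_ le_rfl
      exact le_biSup m (Set.mem_union_right _ ⟨i, Set.mem_Iio.2 (Finset.mem_range.1 hi), rfl⟩)
    calc ∫⁻ ω in A, ∏ i ∈ range (n + 1), f i ω ∂P
        = ∫⁻ ω, (A.indicator 1 ω * ∏ i ∈ range n, f i ω) * f n ω ∂P := by
          rw [← lintegral_indicator hA']
          congr 1; funext ω
          by_cases hω : ω ∈ A <;> simp [hω, Finset.prod_range_succ]
      _ = (∫⁻ ω in A, ∏ i ∈ range n, f i ω ∂P) * ∫⁻ ω, f n ω ∂P := by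
          rw [lintegral_mul_eq_lintegral_mul_lintegral_of_independent_measurableSpace
            (iSup₂_le fun j _ => hm j) (hm _) hindep hprod (hf n), ← lintegral_indicator hA']
          congr 1; congr 1; funext ω
          by_cases hω : ω ∈ A <;> simp [hω]
      _ = P A * ∏ i ∈ range (n + 1), ∫⁻ ω, f i ω ∂P := by
          rw [ih, Finset.prod_range_succ, mul_assoc]

theorem lintegral_prod_range_le_of_iIndep (hm : ∀ j, m j ≤ mΩ) (hind : iIndep m P)
    {S : Set ι} {e : ℕ → ι} (he : Function.Injective e) (heS : ∀ i, e i ∉ S)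
    {N : Ω → ℕ} (hN : Measurable[⨆ j ∈ S, m j] N)
    {f : ℕ → Ω → ℝ≥0∞} (hf : ∀ i, Measurable[m (e i)] (f i)) {a : ℝ≥0∞}
    (hfa : ∀ i, ∫⁻ ω, f i ω ∂P ≤ a) :
    ∫⁻ ω, ∏ i ∈ range (N ω), f i ω ∂P ≤ ∫⁻ ω, a ^ N ω ∂P := by
  have hN' : Measurable N := hN.mono (iSup₂_le fun j _ => hm j) le_rfl
  rw [lintegral_eq_tsum_setLIntegral_fiber hN', lintegral_eq_tsum_setLIntegral_fiber hN']
  refine ENNReal.tsum_le_tsum fun k => ?_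
  have hk := hN' (measurableSet_singleton k)
  calc ∫⁻ ω in N ⁻¹' {k}, ∏ i ∈ range (N ω), f i ω ∂P
      = ∫⁻ ω in N ⁻¹' {k}, ∏ i ∈ range k, f i ω ∂P :=
        setLIntegral_congr_fun hk fun ω hω => by rw [Set.mem_singleton_iff.1 hω]
    _ = P (N ⁻¹' {k}) * ∏ i ∈ range k, ∫⁻ ω, f i ω ∂P :=
        setLIntegral_prod_range_eq_of_iIndep hm hind he heS (hN (measurableSet_singleton k)) hf k
    _ ≤ P (N ⁻¹' {k}) * a ^ k := by
        gcongr; simpa using Finset.prod_le_pow_card (range k) _ _ fun i _ => hfa i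
    _ = ∫⁻ ω in N ⁻¹' {k}, a ^ N ω ∂P := by
        rw [setLIntegral_congr_fun hk fun ω hω => by rw [Set.mem_singleton_iff.1 hω],
          setLIntegral_const, mul_comm]
end

section
variable {Ω : Type*} {mΩ : MeasurableSpace Ω} {P : Measure Ω}

lemma lintegral_ofReal_exp_mul_mono (N : Ω → ℕ) {v w : ℝ} (hvw : v ≤ w) :
    ∫⁻ ω, ENNReal.ofReal (exp (v * N ω)) ∂P ≤ ∫⁻ ω, ENNReal.ofReal (exp (w * N ω)) ∂P :=
  lintegral_mono fun ω => ENNReal.ofReal_le_ofReal (exp_le_exp.2 (by gcongr))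

lemma lintegral_ofReal_exp_mul_eq_of_map_eq {X : Ω → ℕ} (hX : Measurable X) {ν : Measure ℕ}
    (hXν : P.map X = ν) (u : ℝ) :
    ∫⁻ ω, ENNReal.ofReal (exp (u * X ω)) ∂P = ∫⁻ n, ENNReal.ofReal (exp (u * n)) ∂ν := by
  rw [← hXν, lintegral_map (measurable_of_countable _) hX]

lemma integrable_and_integral_le_of_lintegral_ofReal_le {f : Ω → ℝ}
    (hf : AEStronglyMeasurable f P) (hf0 : ∀ ω, 0 ≤ f ω) {C : ℝ} (hC : 0 ≤ C)
    (h : ∫⁻ ω, ENNReal.ofReal (f ω) ∂P ≤ ENNReal.ofReal C) :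
    Integrable f P ∧ ∫ ω, f ω ∂P ≤ C := by
  refine ⟨⟨hf, ?_⟩, ?_⟩
  · rw [hasFiniteIntegral_iff_ofReal (ae_of_all _ hf0)]
    exact h.trans_lt ENNReal.ofReal_lt_top
  · rw [integral_eq_lintegral_of_nonneg_ae (ae_of_all _ hf0) hf]
    exact ENNReal.toReal_le_of_le_ofReal hC h

end

namespace GaltonWatson

variable {Ω : Type*} {ξ₀ : Ω → ℕ} {ξ : ℕ → ℕ → Ω → ℕ} {Z : ℕ → Ω → ℕ}

/-- Offspring variables indexed by vertices: `none` is the root, `some (s, i)` the `i`-th vertex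
of generation `s`. -/
def offspring (ξ₀ : Ω → ℕ) (ξ : ℕ → ℕ → Ω → ℕ) (j : Option (ℕ × ℕ)) : Ω → ℕ :=
  j.elim ξ₀ fun p => ξ p.1 p.2

def generation (j : Option (ℕ × ℕ)) : ℕ := j.elim 0 Prod.fst

abbrev offspringBefore (ξ₀ : Ω → ℕ) (ξ : ℕ → ℕ → Ω → ℕ) (s : ℕ) : MeasurableSpace Ω :=
  ⨆ j ∈ {j | generation j < s}, MeasurableSpace.comap (offspring ξ₀ ξ j) inferInstance

lemma measurable_generationSize (hZ1 : ∀ ω, Z 1 ω = ξ₀ ω)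
    (hZ : ∀ s, 1 ≤ s → ∀ ω, Z (s + 1) ω = ∑ i ∈ range (Z s ω), ξ s i ω) {s : ℕ} (hs : 1 ≤ s) :
    Measurable[offspringBefore ξ₀ ξ s] (Z s) := by
  have hle : ∀ {s j}, generation j < s → Measurable[offspringBefore ξ₀ ξ s] (offspring ξ₀ ξ j) :=
    fun hj => Measurable.of_comap_le
      (le_biSup (fun j => MeasurableSpace.comap (offspring ξ₀ ξ j) inferInstance) hj)
  induction s, hs using Nat.le_induction with
  | base => exact funext hZ1 ▸ hle (j := none) Nat.one_pos
  | succ s hs ih =>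
    have hsum : Measurable fun p : (ℕ → ℕ) × ℕ => ∑ i ∈ range p.2, p.1 i :=
      measurable_from_prod_countable_left fun k =>
        Finset.measurable_sum (range k) fun i _ => measurable_pi_apply i
    rw [show Z (s + 1) = fun ω => ∑ i ∈ range (Z s ω), ξ s i ω from funext (hZ s hs)]
    refine hsum.comp (Measurable.prodMk (@measurable_pi_lambda _ _ _ (_) _ _ fun i => ?_) ?_)
    · exact hle (j := some (s, i)) (Nat.lt_succ_self s)
    · exact ih.mono (biSup_mono fun j hj => Nat.lt_succ_of_lt hj) le_rfl

lemma comap_offspring_le {mΩ : MeasurableSpace Ω} (hξ₀ : Measurable ξ₀)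
    (hξ : ∀ s i, Measurable (ξ s i)) (j : Option (ℕ × ℕ)) :
    MeasurableSpace.comap (offspring ξ₀ ξ j) inferInstance ≤ mΩ := by
  cases j with
  | none => exact hξ₀.comap_le
  | some p => exact (hξ p.1 p.2).comap_le

lemma lintegral_exp_generationSize_succ_le {mΩ : MeasurableSpace Ω} {P : Measure Ω}
    (hξ₀ : Measurable ξ₀) (hξ : ∀ s i, Measurable (ξ s i))
    (hindep : iIndepFun (offspring ξ₀ ξ) P)
    (hZ1 : ∀ ω, Z 1 ω = ξ₀ ω)
    (hZ : ∀ s, 1 ≤ s → ∀ ω, Z (s + 1) ω = ∑ i ∈ range (Z s ω), ξ s i ω) {s : ℕ} (hs : 1 ≤ s)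
    {u v : ℝ}
    (hmgf : ∀ i, ∫⁻ ω, ENNReal.ofReal (exp (u * ξ s i ω)) ∂P ≤ ENNReal.ofReal (exp v)) :
    ∫⁻ ω, ENNReal.ofReal (exp (u * Z (s + 1) ω)) ∂P
      ≤ ∫⁻ ω, ENNReal.ofReal (exp (v * Z s ω)) ∂P := by
  calc ∫⁻ ω, ENNReal.ofReal (exp (u * Z (s + 1) ω)) ∂P
      = ∫⁻ ω, ∏ i ∈ range (Z s ω), ENNReal.ofReal (exp (u * ξ s i ω)) ∂P := by
        refine lintegral_congr fun ω => ?_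
        rw [hZ s hs, Nat.cast_sum, mul_sum, exp_sum,
          ENNReal.ofReal_prod_of_nonneg fun i _ => (exp_pos _).le]
    _ ≤ ∫⁻ ω, ENNReal.ofReal (exp v) ^ Z s ω ∂P :=
        lintegral_prod_range_le_of_iIndep (comap_offspring_le hξ₀ hξ) hindep.iIndep
          (S := {j | generation j < s}) (e := fun i => some (s, i)) (fun i k h => by simpa using h)
          (fun i => (lt_irrefl s : ¬ s < s)) (measurable_generationSize hZ1 hZ hs)
          (f := fun i ω => ENNReal.ofReal (exp (u * ξ s i ω)))
          (fun i => (measurable_of_countable (fun n : ℕ => ENNReal.ofReal (exp (u * n)))).comp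
            (comap_measurable _)) hmgf
    _ = ∫⁻ ω, ENNReal.ofReal (exp (v * Z s ω)) ∂P := by
        refine lintegral_congr fun ω => ?_
        rw [← ENNReal.ofReal_pow (exp_pos _).le, ← exp_nat_mul, mul_comm]

lemma lintegral_exp_exponentSeq_mul_generationSize_le {mΩ : MeasurableSpace Ω} {P : Measure Ω}
    {μ μt : Measure ℕ} [IsProbabilityMeasure μt] {c d t : ℝ} (hc : 0 < c)
    (hμ : Integrable (fun n : ℕ => exp (c * n)) μ) (hμt : Integrable (fun n : ℕ => exp (c * n)) μt)
    (hd : d = ∫ n, (n : ℝ) ∂μt) (hd1 : 1 < d) (ht : 0 ≤ t) (htc : t ≤ c / 4)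
    (htK : 4 * (8 / c ^ 2 * ∫ n, exp (c * n) ∂μt) * t ≤ d - 1)
    (hξ₀ : Measurable ξ₀) (hξ : ∀ s i, Measurable (ξ s i))
    (hξ₀μ : P.map ξ₀ = μ) (hξμt : ∀ s i, P.map (ξ s i) = μt)
    (hindep : iIndepFun (offspring ξ₀ ξ) P) (hZ1 : ∀ ω, Z 1 ω = ξ₀ ω)
    (hZ : ∀ s, 1 ≤ s → ∀ ω, Z (s + 1) ω = ∑ i ∈ range (Z s ω), ξ s i ω) {s : ℕ} (hs : 1 ≤ s) :
    ∫⁻ ω, ENNReal.ofReal (exp (exponentSeq t d s * Z s ω)) ∂P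
      ≤ ENNReal.ofReal (∫ n, exp (c * n) ∂μ) := by
  have hK : 0 ≤ 8 / c ^ 2 * ∫ n, exp (c * n) ∂μt :=
    mul_nonneg (by positivity) (integral_nonneg fun n => (exp_pos _).le)
  set u := exponentSeq t d
  have hu : ∀ s, 0 ≤ u s ∧ u s ≤ c / 2 := fun s =>
    ⟨exponentSeq_nonneg ht hd1.le s, (exponentSeq_le ht hd1.le s).trans (by linarith)⟩
  induction s, hs using Nat.le_induction with
  | base =>
    calc ∫⁻ ω, ENNReal.ofReal (exp (u 1 * Z 1 ω)) ∂P
        = ∫⁻ n, ENNReal.ofReal (exp (u 1 * n)) ∂μ := by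
          simp_rw [hZ1]; exact lintegral_ofReal_exp_mul_eq_of_map_eq hξ₀ hξ₀μ _
      _ ≤ ∫⁻ n, ENNReal.ofReal (exp (c * n)) ∂μ :=
          lintegral_ofReal_exp_mul_mono id (by linarith [hu 1])
      _ = ENNReal.ofReal (∫ n, exp (c * n) ∂μ) :=
          (ofReal_integral_eq_lintegral_ofReal hμ (ae_of_all _ fun n => (exp_pos _).le)).symm
  | succ s hs ih =>
    refine (lintegral_exp_generationSize_succ_le hξ₀ hξ hindep hZ1 hZ hs fun i => ?_).trans
      ((lintegral_ofReal_exp_mul_mono _ (exponentSeq_succ_mul_add_sq_le hK ht hd1 htK s)).trans ih)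
    rw [lintegral_ofReal_exp_mul_eq_of_map_eq (hξ s i) (hξμt s i)]
    simpa only [← hd] using
      lintegral_ofReal_exp_mul_le_of_integrable_exp μt hc hμt (hu (s + 1)).1 (hu (s + 1)).2

end GaltonWatson

theorem gw_generation_exponential_moment_general {Ω : Type*} [MeasureSpace Ω]
    [IsProbabilityMeasure (ℙ : Measure Ω)]
    (μ μt : Measure ℕ) [IsProbabilityMeasure μ] [IsProbabilityMeasure μt]
    (c : ℝ) (hc : 0 < c)
    (hμexp : Integrable (fun n : ℕ => Real.exp (c * n)) μ)
    (hμtexp : Integrable (fun n : ℕ => Real.exp (c * n)) μt)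
    (dt : ℝ) (hdt : dt = ∫ n, (n : ℝ) ∂μt) (hdt1 : 1 < dt)
    -- the offspring variables: `ξ₀` for the root, `ξ s i` for the `i`-th vertex of
    -- generation `s ≥ 1`, all jointly independent with the stated distributions
    (ξ₀ : Ω → ℕ) (ξ : ℕ → ℕ → Ω → ℕ)
    (hξ₀meas : Measurable ξ₀) (hξmeas : ∀ s i, Measurable (ξ s i))
    (hξ₀dist : Measure.map ξ₀ ℙ = μ) (hξdist : ∀ s i, Measure.map (ξ s i) ℙ = μt)
    (hindep : iIndepFun
      (fun (j : Option (ℕ × ℕ)) => Option.elim j ξ₀ (fun p => ξ p.1 p.2)) ℙ)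
    -- the generation sizes
    (Z : ℕ → Ω → ℕ) (hZ1 : ∀ ω, Z 1 ω = ξ₀ ω)
    (hZ : ∀ s, 1 ≤ s → ∀ ω, Z (s + 1) ω = ∑ i ∈ Finset.range (Z s ω), ξ s i ω) :
    ∃ t > (0 : ℝ), ∃ C : ℝ, ∀ s, 1 ≤ s →
      Integrable (fun ω => Real.exp (t * (Z s ω : ℝ) * (dt ^ s)⁻¹)) ℙ ∧
      ∫ ω, Real.exp (t * (Z s ω : ℝ) * (dt ^ s)⁻¹) ∂ℙ ≤ C := by
  set K := 8 / c ^ 2 * ∫ n, exp (c * n) ∂μt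
  have hK : 0 ≤ K := mul_nonneg (by positivity) (integral_nonneg fun n => (exp_pos _).le)
  set t := min (c / 4) ((dt - 1) / (4 * K + 1))
  have ht : 0 < t := lt_min (by positivity) (div_pos (by linarith) (by positivity))
  have htK : 4 * K * t ≤ dt - 1 := by
    have := (le_div_iff₀ (by positivity)).1 (min_le_right (c / 4) ((dt - 1) / (4 * K + 1)))
    nlinarith
  refine ⟨t, ht, ∫ n, exp (c * n) ∂μ, fun s hs => ?_⟩
  have hbound := GaltonWatson.lintegral_exp_exponentSeq_mul_generationSize_le hc hμexp hμtexp
    hdt hdt1 ht.le (min_le_left _ _) htK hξ₀meas hξmeas hξ₀dist hξdist hindep hZ1 hZ hs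
  have hle : ∀ ω, t * (Z s ω : ℝ) * (dt ^ s)⁻¹ ≤ exponentSeq t dt s * Z s ω := fun ω => by
    rw [mul_right_comm]
    gcongr
    exact mul_inv_pow_le_exponentSeq ht.le hdt1.le s
  have hZm : Measurable (Z s) := (GaltonWatson.measurable_generationSize hZ1 hZ hs).mono
    (iSup₂_le fun j _ => GaltonWatson.comap_offspring_le hξ₀meas hξmeas j) le_rfl
  exact integrable_and_integral_le_of_lintegral_ofReal_le (by fun_prop)
    (fun ω => (exp_pos _).le) (integral_nonneg fun n => (exp_pos _).le)
    ((lintegral_mono fun ω => ENNReal.ofReal_le_ofReal (exp_le_exp.2 (hle ω))).trans hbound)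

/-- Exponential moment bound for a Galton–Watson branching process whose root has
offspring distribution `μ` and all other vertices offspring distribution `μ̃`, both with
exponential moments, and with `d̃ = E_{μ̃}[D] > 1`: there is `t > 0` with
`sup_{s≥1} E[exp(t·Z_s·d̃^{−s})] < ∞`. -/
theorem gw_generation_exponential_moment {Ω : Type*} [MeasureSpace Ω]
    [IsProbabilityMeasure (ℙ : Measure Ω)]
    (μ μt : Measure ℕ) [IsProbabilityMeasure μ] [IsProbabilityMeasure μt]
    (c : ℝ) (hc : 0 < c)
    (hμexp : Integrable (fun n : ℕ => Real.exp (c * n)) μ)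
    (hμtexp : Integrable (fun n : ℕ => Real.exp (c * n)) μt)
    (dt : ℝ) (hdt : dt = ∫ n, (n : ℝ) ∂μt) (hdt1 : 1 < dt)
    -- the offspring variables: `ξ₀` for the root, `ξ s i` for the `i`-th vertex of
    -- generation `s ≥ 1`, all jointly independent with the stated distributions
    (ξ₀ : Ω → ℕ) (ξ : ℕ → ℕ → Ω → ℕ)
    (hξ₀meas : Measurable ξ₀) (hξmeas : ∀ s i, Measurable (ξ s i))
    (hξ₀dist : Measure.map ξ₀ ℙ = μ) (hξdist : ∀ s i, Measure.map (ξ s i) ℙ = μt)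
    (hindep : iIndepFun
      (fun (j : Option (ℕ × ℕ)) => Option.elim j ξ₀ (fun p => ξ p.1 p.2)) ℙ)
    -- the generation sizes
    (Z : ℕ → Ω → ℕ) (hZ0 : ∀ ω, Z 0 ω = 1) (hZ1 : ∀ ω, Z 1 ω = ξ₀ ω)
    (hZ : ∀ s, 1 ≤ s → ∀ ω, Z (s + 1) ω = ∑ i ∈ Finset.range (Z s ω), ξ s i ω) :
    ∃ t > (0 : ℝ), ∃ C : ℝ, ∀ s, 1 ≤ s →
      Integrable (fun ω => Real.exp (t * (Z s ω : ℝ) * (dt ^ s)⁻¹)) ℙ ∧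
      ∫ ω, Real.exp (t * (Z s ω : ℝ) * (dt ^ s)⁻¹) ∂ℙ ≤ C :=
  gw_generation_exponential_moment_general μ μt c hc hμexp hμtexp dt hdt hdt1 ξ₀ ξ hξ₀meas hξmeas
    hξ₀dist hξdist hindep Z hZ1 hZ
end
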